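/- Fix a > 0 and define u : R^2\{0} -> R by u(x) = 2(|x|^2/a^2 - 1) + (|x|/a - a/|x|) x_1/|x|. Then Delta u = 8/a^2 everywhere on R^2\{0}, and u = 0 on the circle {|x| = a}. Consequently the field v = ∇^⊥u satisfies div v = 0, is tangential to the circle {|x| = a}, and solves the steady Euler equations with pressure p = -|v|^2/2 + (8/a^2) u on {x : |x| ≥ a}. -/

import Mathlib

/-!
Without square roots, `u = 2|x|²/a² - 2 + x₁/a - a x₁/|x|²`; the last two terms (a linear
function and a dipole) are harmonic, so `Δu = 8/a²`. For any `C²` stream function `f` with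
`Δf = c` at a point, `v = ∇^⊥f` is divergence free there by the symmetry of second derivatives,
and `(v·∇)v = ∇(|v|²/2) - c ∇f`, so `p = -|v|²/2 + c f` solves the steady Euler equations.
-/

noncomputable def pd1 (f : ℝ × ℝ → ℝ) (x : ℝ × ℝ) : ℝ := fderiv ℝ f x (1, 0)
noncomputable def pd2 (f : ℝ × ℝ → ℝ) (x : ℝ × ℝ) : ℝ := fderiv ℝ f x (0, 1)
noncomputable def rad (x : ℝ × ℝ) : ℝ := Real.sqrt (x.1 ^ 2 + x.2 ^ 2)

open Filter Topology ContinuousLinearMap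

theorem HasFDerivAt.div {𝕜 E : Type*} [NontriviallyNormedField 𝕜]
    [NormedAddCommGroup E] [NormedSpace 𝕜 E] {c d : E → 𝕜} {c' d' : E →L[𝕜] 𝕜} {x : E}
    (hc : HasFDerivAt c c' x) (hd : HasFDerivAt d d' x) (hx : d x ≠ 0) :
    HasFDerivAt (fun y => c y / d y) ((d x)⁻¹ • c' - (c x / d x ^ 2) • d') x := by
  have h := hc.mul ((hasDerivAt_inv hx).comp_hasFDerivAt x hd)
  rw [show (fun y => c y / d y) = c * (fun y => y⁻¹) ∘ d from funext fun y => div_eq_mul_inv _ _]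
  refine h.congr_fderiv ?_
  ext v
  simp
  ring

theorem ContDiffAt.differentiableAt_fderiv {𝕜 E F : Type*} [NontriviallyNormedField 𝕜]
    [NormedAddCommGroup E] [NormedSpace 𝕜 E] [NormedAddCommGroup F] [NormedSpace 𝕜 F]
    {f : E → F} {x : E} (hf : ContDiffAt 𝕜 2 f x) : DifferentiableAt 𝕜 (fderiv 𝕜 f) x :=
  (hf.fderiv_right (m := 1) (by norm_num)).differentiableAt one_ne_zero

section PartialDerivatives

variable {f g : ℝ × ℝ → ℝ} {x : ℝ × ℝ}

theorem fderiv_apply_one_zero : fderiv ℝ f x (1, 0) = pd1 f x := rfl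

theorem fderiv_apply_zero_one : fderiv ℝ f x (0, 1) = pd2 f x := rfl

theorem pd1_of_hasFDerivAt {L : ℝ × ℝ →L[ℝ] ℝ} (h : HasFDerivAt f L x) : pd1 f x = L (1, 0) := by
  rw [pd1, h.fderiv]

theorem pd2_of_hasFDerivAt {L : ℝ × ℝ →L[ℝ] ℝ} (h : HasFDerivAt f L x) : pd2 f x = L (0, 1) := by
  rw [pd2, h.fderiv]

theorem pd1_congr (h : f =ᶠ[𝓝 x] g) : pd1 f x = pd1 g x := by
  rw [pd1, pd1, h.fderiv_eq]

theorem pd2_congr (h : f =ᶠ[𝓝 x] g) : pd2 f x = pd2 g x := by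
  rw [pd2, pd2, h.fderiv_eq]

theorem pd1_neg : pd1 (fun y => -f y) x = -pd1 f x := by
  simp [pd1]

theorem pd2_neg : pd2 (fun y => -f y) x = -pd2 f x := by
  simp [pd2]

theorem ContDiffAt.differentiableAt_pd1 (hf : ContDiffAt ℝ 2 f x) : DifferentiableAt ℝ (pd1 f) x :=
  hf.differentiableAt_fderiv.clm_apply (differentiableAt_const _)

theorem ContDiffAt.differentiableAt_pd2 (hf : ContDiffAt ℝ 2 f x) : DifferentiableAt ℝ (pd2 f) x :=
  hf.differentiableAt_fderiv.clm_apply (differentiableAt_const _)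

theorem ContDiffAt.pd1_pd2_comm (hf : ContDiffAt ℝ 2 f x) : pd1 (pd2 f) x = pd2 (pd1 f) x := by
  have hD := hf.differentiableAt_fderiv.hasFDerivAt
  rw [pd1_of_hasFDerivAt (f := pd2 f) (hD.clm_apply (hasFDerivAt_const (0, 1) x)),
    pd2_of_hasFDerivAt (f := pd1 f) (hD.clm_apply (hasFDerivAt_const (1, 0) x))]
  simpa using hf.isSymmSndFDerivAt (by simp) (1, 0) (0, 1)

theorem div_perpGrad_eq_zero (hf : ContDiffAt ℝ 2 f x) {v1 v2 : ℝ × ℝ → ℝ}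
    (hv1 : ∀ y, v1 y = -pd2 f y) (hv2 : ∀ y, v2 y = pd1 f y) : pd1 v1 x + pd2 v2 x = 0 := by
  obtain rfl : v1 = fun y => -pd2 f y := funext hv1
  obtain rfl : v2 = pd1 f := funext hv2
  rw [pd1_neg, hf.pd1_pd2_comm, neg_add_cancel]

theorem steadyEuler_perpGrad (hf : ContDiffAt ℝ 2 f x) {c : ℝ}
    (hΔ : pd1 (pd1 f) x + pd2 (pd2 f) x = c) {v1 v2 p : ℝ × ℝ → ℝ}
    (hv1 : ∀ y, v1 y = -pd2 f y) (hv2 : ∀ y, v2 y = pd1 f y)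
    (hp : ∀ y, p y = -(v1 y ^ 2 + v2 y ^ 2) / 2 + c * f y) :
    v1 x * pd1 v1 x + v2 x * pd2 v1 x + pd1 p x = 0 ∧
      v1 x * pd1 v2 x + v2 x * pd2 v2 x + pd2 p x = 0 := by
  obtain rfl : v1 = fun y => -pd2 f y := funext hv1
  obtain rfl : v2 = pd1 f := funext hv2
  obtain rfl : p = fun y => -(1 / 2) * (pd2 f y ^ 2 + pd1 f y ^ 2) + c * f y :=
    funext fun y => (hp y).trans (by ring)
  have hp' : HasFDerivAt (fun y => -(1 / 2) * (pd2 f y ^ 2 + pd1 f y ^ 2) + c * f y) _ x :=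
    ((((hf.differentiableAt_pd2.hasFDerivAt).pow 2).add
    (hf.differentiableAt_pd1.hasFDerivAt.pow 2)).const_mul (-(1 / 2))).add
    ((hf.differentiableAt two_ne_zero).hasFDerivAt.const_mul c)
  rw [pd1_of_hasFDerivAt hp', pd2_of_hasFDerivAt hp', pd1_neg, pd2_neg]
  simp only [add_apply, smul_apply, smul_eq_mul, nsmul_eq_mul, fderiv_apply_one_zero,
    fderiv_apply_zero_one]
  constructor
  · linear_combination (-pd1 f x) * hΔ
  · linear_combination (-pd2 f x) * hΔ

end PartialDerivatives

noncomputable def radSq (y : ℝ × ℝ) : ℝ := y.1 ^ 2 + y.2 ^ 2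

noncomputable def stream (a : ℝ) (y : ℝ × ℝ) : ℝ :=
  2 / a ^ 2 * radSq y - 2 + a⁻¹ * y.1 - a * y.1 / radSq y

noncomputable def streamD1 (a : ℝ) (y : ℝ × ℝ) : ℝ :=
  4 / a ^ 2 * y.1 + a⁻¹ - a * (y.2 ^ 2 - y.1 ^ 2) / radSq y ^ 2

noncomputable def streamD2 (a : ℝ) (y : ℝ × ℝ) : ℝ :=
  4 / a ^ 2 * y.2 + 2 * a * y.1 * y.2 / radSq y ^ 2

section Stream

variable {a : ℝ} {x : ℝ × ℝ}

theorem rad_sq (x : ℝ × ℝ) : rad x ^ 2 = radSq x := Real.sq_sqrt (by positivity)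

theorem radSq_ne_zero (hx : x ≠ 0) : radSq x ≠ 0 := by
  contrapose! hx
  simpa [radSq, Prod.ext_iff, add_eq_zero_iff_of_nonneg, sq_nonneg] using hx

theorem hasFDerivAt_radSq (x : ℝ × ℝ) :
    HasFDerivAt radSq ((2 * x.1) • fst ℝ ℝ ℝ + (2 * x.2) • snd ℝ ℝ ℝ) x := by
  have h : HasFDerivAt (fun y : ℝ × ℝ => y.1 ^ 2 + y.2 ^ 2) _ x :=
    ((hasFDerivAt_fst (𝕜 := ℝ)).pow 2).add ((hasFDerivAt_snd (𝕜 := ℝ)).pow 2)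
  refine h.congr_fderiv ?_
  ext <;> simp

-- At `x = 0` both sides are `-2`, by the convention `t / 0 = 0`.
theorem stream_eq (ha : a ≠ 0) (x : ℝ × ℝ) :
    2 * (rad x ^ 2 / a ^ 2 - 1) + (rad x / a - a / rad x) * (x.1 / rad x) = stream a x := by
  rcases eq_or_ne x 0 with rfl | hx
  · simp [rad, stream, radSq]
  have hr : rad x ≠ 0 := by
    intro h
    exact radSq_ne_zero hx (by rw [← rad_sq, h]; ring)
  rw [stream, ← rad_sq]
  field_simp
  ring

theorem contDiffAt_stream (hx : x ≠ 0) : ContDiffAt ℝ 2 (stream a) x := by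
  have := radSq_ne_zero hx
  unfold stream radSq at *
  fun_prop (disch := assumption)

theorem hasFDerivAt_stream (hx : x ≠ 0) :
    HasFDerivAt (stream a) (streamD1 a x • fst ℝ ℝ ℝ + streamD2 a x • snd ℝ ℝ ℝ) x := by
  have hs := radSq_ne_zero hx
  have h : HasFDerivAt (stream a) _ x :=
    ((((hasFDerivAt_radSq x).const_mul (2 / a ^ 2)).sub_const 2).add
      (hasFDerivAt_fst.const_mul a⁻¹)).sub
      ((hasFDerivAt_fst.const_mul a).div (hasFDerivAt_radSq x) hs)
  refine h.congr_fderiv (ContinuousLinearMap.ext fun v => ?_)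
  simp only [smul_add, sub_apply, add_apply, smul_apply, coe_fst', smul_eq_mul, coe_snd', streamD1,
    streamD2]
  field_simp
  unfold radSq
  ring

theorem pd1_stream (hx : x ≠ 0) : pd1 (stream a) x = streamD1 a x := by
  simp [pd1_of_hasFDerivAt (hasFDerivAt_stream hx)]

theorem pd2_stream (hx : x ≠ 0) : pd2 (stream a) x = streamD2 a x := by
  simp [pd2_of_hasFDerivAt (hasFDerivAt_stream hx)]

theorem laplacian_stream (hx : x ≠ 0) :
    pd1 (pd1 (stream a)) x + pd2 (pd2 (stream a)) x = 8 / a ^ 2 := by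
  have hnear : ∀ᶠ y in 𝓝 x, y ≠ 0 := eventually_ne_nhds hx
  rw [pd1_congr (hnear.mono fun y hy => pd1_stream hy),
    pd2_congr (hnear.mono fun y hy => pd2_stream hy)]
  have hs := radSq_ne_zero hx
  have hs2 := (hasFDerivAt_radSq x).pow 2
  have h1 : HasFDerivAt (streamD1 a) _ x :=
    ((hasFDerivAt_fst.const_mul (4 / a ^ 2)).add_const a⁻¹).sub
      (((((hasFDerivAt_snd (𝕜 := ℝ)).pow 2).sub ((hasFDerivAt_fst (𝕜 := ℝ)).pow 2)).const_mul
        a).div hs2 (pow_ne_zero 2 hs))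
  have h2 : HasFDerivAt (streamD2 a) _ x :=
    (hasFDerivAt_snd.const_mul (4 / a ^ 2)).add
      (((hasFDerivAt_fst.const_mul (2 * a)).mul hasFDerivAt_snd).div hs2
        (pow_ne_zero 2 hs))
  rw [pd1_of_hasFDerivAt h1, pd2_of_hasFDerivAt h2]
  simp only [Nat.add_one_sub_one, pow_one, nsmul_eq_mul, Nat.cast_ofNat, smul_add, sub_apply,
    smul_apply, coe_fst', smul_eq_mul, mul_one, coe_snd', mul_zero, zero_sub, mul_neg, add_apply,
    add_zero, Pi.mul_apply, zero_add]
  field_simp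
  unfold radSq
  ring

theorem ne_zero_of_rad_pos (h : 0 < rad x) : x ≠ 0 := by
  rintro rfl
  simp [rad] at h

theorem perpGrad_stream_tangent (ha : 0 < a) (hx : rad x = a) :
    -pd2 (stream a) x * x.1 + pd1 (stream a) x * x.2 = 0 := by
  have hx0 := ne_zero_of_rad_pos (hx ▸ ha)
  have hs : radSq x = a ^ 2 := by rw [← rad_sq, hx]
  rw [pd1_stream hx0, pd2_stream hx0, streamD1, streamD2, hs]
  unfold radSq at hs
  field_simp
  linear_combination (-x.2) * hs

end Stream

/-- For `a > 0` and `u(x) = 2(|x|²/a² - 1) + (|x|/a - a/|x|) x₁/|x|`, one has `Δu = 8/a²`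
on `ℝ²\{0}`, `u = 0` on `{|x| = a}`, and `v = ∇^⊥u` is divergence free, tangential to
`{|x| = a}`, and solves the steady Euler equations with `p = -|v|²/2 + (8/a²)u` on `{|x| ≥ a}`. -/
theorem stmt6 (a : ℝ) (ha : 0 < a) (u : ℝ × ℝ → ℝ)
    (hu : ∀ x, u x = 2 * ((rad x) ^ 2 / a ^ 2 - 1) + (rad x / a - a / rad x) * (x.1 / rad x))
    (v1 v2 p : ℝ × ℝ → ℝ)
    (hv1 : ∀ x, v1 x = -(pd2 u x)) (hv2 : ∀ x, v2 x = pd1 u x)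
    (hp : ∀ x, p x = -((v1 x) ^ 2 + (v2 x) ^ 2) / 2 + (8 / a ^ 2) * u x) :
    (∀ x : ℝ × ℝ, x ≠ 0 → pd1 (pd1 u) x + pd2 (pd2 u) x = 8 / a ^ 2) ∧
    (∀ x : ℝ × ℝ, rad x = a → u x = 0) ∧
    (∀ x : ℝ × ℝ, x ≠ 0 → pd1 v1 x + pd2 v2 x = 0) ∧
    (∀ x : ℝ × ℝ, rad x = a → v1 x * x.1 + v2 x * x.2 = 0) ∧
    (∀ x : ℝ × ℝ, a ≤ rad x →
      v1 x * pd1 v1 x + v2 x * pd2 v1 x + pd1 p x = 0 ∧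
      v1 x * pd1 v2 x + v2 x * pd2 v2 x + pd2 p x = 0) := by
  obtain rfl : u = stream a := funext fun x => (hu x).trans (stream_eq ha.ne' x)
  have hΔ : ∀ x : ℝ × ℝ, x ≠ 0 → pd1 (pd1 (stream a)) x + pd2 (pd2 (stream a)) x = 8 / a ^ 2 :=
    fun x hx => laplacian_stream hx
  refine ⟨hΔ, fun x hx => ?_, fun x hx => div_perpGrad_eq_zero (contDiffAt_stream hx) hv1 hv2,
    fun x hx => ?_, fun x hx => ?_⟩
  · rw [hu, hx]
    field_simp
    ring
  · rw [hv1, hv2]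
    exact perpGrad_stream_tangent ha hx
  · have hx0 := ne_zero_of_rad_pos (ha.trans_le hx)
    exact steadyEuler_perpGrad (contDiffAt_stream hx0) (hΔ x hx0) hv1 hv2 hp
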